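/- For α > 0, r > 0, h > 0, and integer d ≥ 1, the double time integral ∫_{dh}^{(d+1)h} ∫_0^h (4πα(t−τ))^{−3/2} exp(−r²/(4α(t−τ))) dτ dt equals 2·G^{dτdt}_α(r, dh) − G^{dτdt}_α(r, (d+1)h) − G^{dτdt}_α(r, (d−1)h), where G^{dτdt}_α(r,δ) := (1/(4π)) [ (r/(2α²) + δ/(α r)) erf(r/(2√(αδ))) + (√δ/√(πα³)) exp(−r²/(4αδ)) ] for δ > 0, extended at δ = 0 by its limit r/(8πα²). -/

import Mathlib

/-!
Write `u = r / (2√(αδ))`. Then `G^{dt}_α(r, δ) = erf u / (4παr)` is an antiderivative of `-G_α(r, ·)`,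
and for `δ > 0` one has `G^{dτdt}_α(r, δ) = r / (8πα²) · Φ(u)` with
`Φ(u) = (1 + 1/(2u²)) erf u + e^{-u²} / (√π u)`. The Gaussian terms cancel in `Φ'(u) = -erf u / u³`,
which makes `G^{dτdt}` an antiderivative of `G^{dt}`, and `Φ(u) → 1` as `u → ∞` makes `G^{dτdt}`
continuous at `δ = 0`, where the case `d = 1` needs it. So the inner integral equals
`G^{dt}(t - h) - G^{dt}(t)`, and integrating once more in `t` (the nonnegative derivative
`G^{dt}` is automatically integrable) gives the second difference.
-/

open Real Filter Set

noncomputable def erf (x : ℝ) : ℝ := (2 / Real.sqrt π) * ∫ t in (0:ℝ)..x, Real.exp (-t^2)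

/-- The twice time-integrated heat kernel `G^{dτdt}_α(r,δ)`, extended at `δ = 0` by its
limit `r/(8πα²)`. -/
noncomputable def Gdtdt (α r δ : ℝ) : ℝ :=
  if δ = 0 then r / (8 * π * α^2)
  else (1 / (4 * π)) *
    ((r / (2 * α^2) + δ / (α * r)) * erf (r / (2 * Real.sqrt (α * δ)))
      + Real.sqrt δ / Real.sqrt (π * α^3) * Real.exp (-r^2 / (4 * α * δ)))


open MeasureTheory Topology

lemma hasDerivAt_erf (x : ℝ) : HasDerivAt erf (2 / √π * exp (-x ^ 2)) x := by
  have hcont : Continuous fun t : ℝ => exp (-t ^ 2) := by fun_prop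
  exact (intervalIntegral.integral_hasDerivAt_right (hcont.intervalIntegrable _ _)
    (hcont.stronglyMeasurableAtFilter _ _) hcont.continuousAt).const_mul _

lemma erf_nonneg {x : ℝ} (hx : 0 ≤ x) : 0 ≤ erf x :=
  mul_nonneg (by positivity) (intervalIntegral.integral_nonneg hx fun _ _ => (exp_pos _).le)

lemma tendsto_erf_atTop : Tendsto erf atTop (𝓝 1) := by
  have hint : IntegrableOn (fun t : ℝ => exp (-t ^ 2)) (Ioi 0) := by
    simpa using (integrable_exp_neg_mul_sq one_pos).integrableOn
  have hgauss : ∫ t in Ioi (0 : ℝ), exp (-t ^ 2) = √π / 2 := by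
    simpa using integral_gaussian_Ioi 1
  have h := (intervalIntegral_tendsto_integral_Ioi 0 hint tendsto_id).const_mul (2 / √π)
  rwa [hgauss, div_mul_div_cancel₀ (sqrt_pos.2 pi_pos).ne', div_self two_ne_zero] at h

noncomputable def similarityVar (α r δ : ℝ) : ℝ := r / (2 * √(α * δ))

section similarityVar

variable {α r δ : ℝ}

lemma similarityVar_pos (hα : 0 < α) (hr : 0 < r) (hδ : 0 < δ) : 0 < similarityVar α r δ := by
  unfold similarityVar; have := mul_pos hα hδ; positivity

lemma similarityVar_sq (hα : 0 < α) (hδ : 0 < δ) :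
    similarityVar α r δ ^ 2 = r ^ 2 / (4 * α * δ) := by
  rw [similarityVar, div_pow, mul_pow, sq_sqrt (mul_pos hα hδ).le]; ring

lemma hasDerivAt_similarityVar (hα : 0 < α) (hδ : 0 < δ) :
    HasDerivAt (similarityVar α r) (-similarityVar α r δ / (2 * δ)) δ := by
  have hαδ := mul_pos hα hδ
  have hsqrt := ((hasDerivAt_sqrt hαδ.ne').comp δ ((hasDerivAt_id δ).const_mul α)).const_mul 2
  have hs : 0 < √(α * δ) := sqrt_pos.2 hαδ
  refine ((hasDerivAt_const δ r).div hsqrt (by positivity)).congr_deriv ?_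
  simp only [Function.comp_apply, similarityVar, mul_one, mul_pow, sq_sqrt hαδ.le]
  field_simp
  ring

lemma tendsto_similarityVar_atTop (hα : 0 < α) (hr : 0 < r) :
    Tendsto (similarityVar α r) (𝓝[>] 0) atTop := by
  have hden : Tendsto (fun δ => 2 * √(α * δ)) (𝓝[>] 0) (𝓝[>] 0) := by
    refine tendsto_nhdsWithin_iff.2 ⟨?_, eventually_nhdsWithin_of_forall fun δ hδ => ?_⟩
    · simpa using ((by fun_prop : Continuous fun δ => 2 * √(α * δ)).tendsto 0).mono_left
        nhdsWithin_le_nhds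
    · have := mul_pos hα hδ; exact mem_Ioi.2 (by positivity)
  refine ((tendsto_inv_nhdsGT_zero.comp hden).const_mul_atTop hr).congr fun δ => ?_
  simp only [similarityVar, Function.comp_apply, div_eq_mul_inv]

end similarityVar

noncomputable def heatKernel (α r s : ℝ) : ℝ :=
  (4 * π * α * s) ^ (-(3 : ℝ) / 2) * exp (-r ^ 2 / (4 * α * s))

/-- `G^{dt}_α(r, δ) = ∫_δ^∞ G_α(r, s) ds`. -/
noncomputable def Gdt (α r δ : ℝ) : ℝ := erf (similarityVar α r δ) / (4 * π * α * r)

section Gdt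

variable {α r : ℝ}

lemma continuousOn_heatKernel (hα : 0 < α) : ContinuousOn (heatKernel α r) (Ioi 0) := by
  intro s (hs : 0 < s)
  have hlin : ContinuousAt (fun s : ℝ => 4 * π * α * s) s := by fun_prop
  exact ((hlin.rpow_const (Or.inl (by positivity))).mul
    (continuousAt_const.div (by fun_prop) (by positivity)).rexp).continuousWithinAt

lemma Gdt_nonneg (hα : 0 < α) (hr : 0 < r) (δ : ℝ) : 0 ≤ Gdt α r δ := by
  unfold Gdt similarityVar
  exact div_nonneg (erf_nonneg (by positivity)) (by positivity)

lemma hasDerivAt_Gdt (hα : 0 < α) (hr : 0 < r) {δ : ℝ} (hδ : 0 < δ) :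
    HasDerivAt (Gdt α r) (-heatKernel α r δ) δ := by
  have h := ((hasDerivAt_erf _).comp δ (hasDerivAt_similarityVar (r := r) hα hδ)).div_const
    (4 * π * α * r)
  refine h.congr_deriv ?_
  have hpow : (4 * π * α * δ) ^ (-(3 : ℝ) / 2) = 1 / (4 * π * α * δ * (2 * √π * √(α * δ))) := by
    rw [show -(3 : ℝ) / 2 = -(1 + 1 / 2) by norm_num, rpow_neg (by positivity),
      rpow_add (by positivity), rpow_one, ← sqrt_eq_rpow, mul_assoc _ α, sqrt_mul (by positivity),
      show (4 : ℝ) * π = 2 ^ 2 * π by norm_num, sqrt_mul (by positivity), sqrt_sq zero_le_two,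
      one_div]
  rw [heatKernel, similarityVar_sq hα hδ, hpow, similarityVar, neg_div, mul_comm (4 * α)]
  have := sqrt_pos.2 pi_pos
  field_simp

lemma integral_heatKernel (hα : 0 < α) (hr : 0 < r) {a b : ℝ} (ha : 0 < a) (hb : 0 < b) :
    ∫ s in a..b, heatKernel α r s = Gdt α r a - Gdt α r b := by
  have hsub : uIcc a b ⊆ Ioi 0 := fun s hs => lt_of_lt_of_le (lt_min ha hb) hs.1
  rw [intervalIntegral.integral_eq_sub_of_hasDerivAt (f := -Gdt α r)
    (fun s hs => by simpa using (hasDerivAt_Gdt hα hr (hsub hs)).neg)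
    ((continuousOn_heatKernel hα).mono hsub).intervalIntegrable]
  simp only [Pi.neg_apply]
  ring

lemma integral_heatKernel_comp_sub_left (hα : 0 < α) (hr : 0 < r) {t h : ℝ} (hth : 0 < t - h)
    (ht : 0 < t) : ∫ τ in (0 : ℝ)..h, heatKernel α r (t - τ) = Gdt α r (t - h) - Gdt α r t := by
  rw [intervalIntegral.integral_comp_sub_left (heatKernel α r), sub_zero]
  exact integral_heatKernel hα hr hth ht

end Gdt

noncomputable def GdtdtProfile (u : ℝ) : ℝ :=
  (1 + (2 * u ^ 2)⁻¹) * erf u + exp (-u ^ 2) / (√π * u)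

lemma hasDerivAt_GdtdtProfile {u : ℝ} (hu : u ≠ 0) :
    HasDerivAt GdtdtProfile (-erf u / u ^ 3) u := by
  have hcoef := (((hasDerivAt_pow 2 u).const_mul 2).inv (by positivity)).const_add 1
  have hgauss := (hasDerivAt_pow 2 u).neg.exp
  have hden : HasDerivAt (fun u : ℝ => √π * u) √π u := by
    simpa using (hasDerivAt_id u).const_mul √π
  have := sqrt_pos.2 pi_pos
  refine ((hcoef.mul (hasDerivAt_erf u)).add (hgauss.div hden (by positivity))).congr_deriv ?_
  simp only [Pi.inv_apply, Pi.neg_apply, Nat.cast_ofNat]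
  field_simp
  ring

lemma tendsto_GdtdtProfile_atTop : Tendsto GdtdtProfile atTop (𝓝 1) := by
  have hsq : Tendsto (fun u : ℝ => u ^ 2) atTop atTop := tendsto_pow_atTop two_ne_zero
  have hcoef : Tendsto (fun u : ℝ => 1 + (2 * u ^ 2)⁻¹) atTop (𝓝 (1 + 0)) :=
    (tendsto_inv_atTop_zero.comp (hsq.const_mul_atTop two_pos)).const_add 1
  have hgauss : Tendsto (fun u : ℝ => exp (-u ^ 2) / (√π * u)) atTop (𝓝 (0 * 0)) :=
    (tendsto_exp_atBot.comp (tendsto_neg_atTop_atBot.comp hsq)).mul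
      (tendsto_inv_atTop_zero.comp (tendsto_id.const_mul_atTop (sqrt_pos.2 pi_pos)))
  have h := (hcoef.mul tendsto_erf_atTop).add hgauss
  rwa [add_zero, mul_one, mul_zero, add_zero] at h

lemma Gdtdt_zero (α r : ℝ) : Gdtdt α r 0 = r / (8 * π * α ^ 2) := if_pos rfl

section Gdtdt

variable {α r : ℝ}

lemma Gdtdt_eq_mul_GdtdtProfile (hα : 0 < α) (hr : 0 < r) {δ : ℝ} (hδ : 0 < δ) :
    Gdtdt α r δ = r / (8 * π * α ^ 2) * GdtdtProfile (similarityVar α r δ) := by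
  rw [Gdtdt, if_neg hδ.ne', GdtdtProfile, similarityVar_sq hα hδ, neg_div, similarityVar]
  obtain ⟨a, ha, rfl⟩ : ∃ a, 0 < a ∧ α = a ^ 2 := ⟨√α, sqrt_pos.2 hα, (sq_sqrt hα.le).symm⟩
  obtain ⟨e, he, rfl⟩ : ∃ e, 0 < e ∧ δ = e ^ 2 := ⟨√δ, sqrt_pos.2 hδ, (sq_sqrt hδ.le).symm⟩
  rw [← mul_pow, sqrt_sq (by positivity), sqrt_sq he.le, sqrt_mul pi_pos.le,
    show (a ^ 2) ^ 3 = (a ^ 3) ^ 2 by ring, sqrt_sq (by positivity)]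
  have := sqrt_pos.2 pi_pos
  field_simp
  ring

lemma hasDerivAt_Gdtdt (hα : 0 < α) (hr : 0 < r) {δ : ℝ} (hδ : 0 < δ) :
    HasDerivAt (Gdtdt α r) (Gdt α r δ) δ := by
  have hu := similarityVar_sq (r := r) hα hδ
  have h := ((hasDerivAt_GdtdtProfile (similarityVar_pos hα hr hδ).ne').comp δ
    (hasDerivAt_similarityVar hα hδ)).const_mul (r / (8 * π * α ^ 2))
  refine (h.congr_of_eventuallyEq ?_).congr_deriv ?_
  · filter_upwards [lt_mem_nhds hδ] with x hx using Gdtdt_eq_mul_GdtdtProfile hα hr hx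
  · have := similarityVar_pos hα hr hδ
    rw [Gdt]
    field_simp
    rw [hu]
    field_simp
    ring

lemma continuousOn_Gdtdt (hα : 0 < α) (hr : 0 < r) : ContinuousOn (Gdtdt α r) (Ici 0) := by
  intro δ (hδ : 0 ≤ δ)
  rcases hδ.eq_or_lt with rfl | hδ
  · have h := (tendsto_GdtdtProfile_atTop.comp (tendsto_similarityVar_atTop hα hr)).const_mul
      (r / (8 * π * α ^ 2))
    rw [mul_one] at h
    refine continuousWithinAt_Ioi_iff_Ici.1 ?_
    rw [ContinuousWithinAt, Gdtdt_zero]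
    exact h.congr' (eventually_nhdsWithin_of_forall
      fun δ hδ => (Gdtdt_eq_mul_GdtdtProfile hα hr hδ).symm)
  · exact (hasDerivAt_Gdtdt hα hr hδ).continuousAt.continuousWithinAt

lemma intervalIntegrable_Gdt (hα : 0 < α) (hr : 0 < r) {a b : ℝ} (ha : 0 ≤ a) (hb : 0 ≤ b) :
    IntervalIntegrable (Gdt α r) volume a b :=
  intervalIntegral.intervalIntegrable_deriv_of_nonneg
    ((continuousOn_Gdtdt hα hr).mono fun _ hx => le_trans (le_min ha hb) hx.1)
    (fun _ hx => hasDerivAt_Gdtdt hα hr ((le_min ha hb).trans_lt hx.1))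
    (fun x _ => Gdt_nonneg hα hr x)

lemma integral_Gdt (hα : 0 < α) (hr : 0 < r) {a b : ℝ} (ha : 0 ≤ a) (hb : 0 ≤ b) :
    ∫ δ in a..b, Gdt α r δ = Gdtdt α r b - Gdtdt α r a :=
  intervalIntegral.integral_eq_sub_of_hasDeriv_right
    ((continuousOn_Gdtdt hα hr).mono fun _ hx => le_trans (le_min ha hb) hx.1)
    (fun _ hx => (hasDerivAt_Gdtdt hα hr ((le_min ha hb).trans_lt hx.1)).hasDerivWithinAt)
    (intervalIntegrable_Gdt hα hr ha hb)

end Gdtdt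

theorem stmt14 (α r h : ℝ) (hα : 0 < α) (hr : 0 < r) (hh : 0 < h) (d : ℕ) (hd : 1 ≤ d) :
    ∫ t in (d * h : ℝ)..((d + 1 : ℝ) * h),
        ∫ τ in (0:ℝ)..h,
          (4 * π * α * (t - τ)) ^ (-(3:ℝ)/2) * Real.exp (-r^2 / (4 * α * (t - τ)))
      = 2 * Gdtdt α r (d * h) - Gdtdt α r ((d + 1 : ℝ) * h) - Gdtdt α r ((d - 1 : ℝ) * h) := by
  have hprev : (0 : ℝ) ≤ (d - 1) * h := mul_nonneg (sub_nonneg.2 (Nat.one_le_cast.2 hd)) hh.le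
  have hlow : (d - 1 : ℝ) * h = d * h - h := by ring
  have hup : (d : ℝ) * h = (d + 1) * h - h := by ring
  have hcur : (0 : ℝ) ≤ d * h := by linarith
  have hnext : (0 : ℝ) ≤ (d + 1) * h := by linarith
  have inner : ∀ t ∈ uIoc (d * h : ℝ) ((d + 1 : ℝ) * h),
      ∫ τ in (0 : ℝ)..h, heatKernel α r (t - τ) = Gdt α r (t - h) - Gdt α r t := by
    intro t ht
    rw [uIoc_of_le (by linarith)] at ht
    exact integral_heatKernel_comp_sub_left hα hr (by linarith [ht.1]) (by linarith [ht.1])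
  have hshift : IntervalIntegrable (fun t => Gdt α r (t - h)) volume (d * h) ((d + 1 : ℝ) * h) := by
    convert (intervalIntegrable_Gdt hα hr hprev hcur).comp_sub_right h using 1 <;> ring
  change ∫ t in _.._, ∫ τ in (0 : ℝ)..h, heatKernel α r (t - τ) = _
  rw [intervalIntegral.integral_congr_ae (ae_of_all _ inner),
    intervalIntegral.integral_sub hshift (intervalIntegrable_Gdt hα hr hcur hnext),
    intervalIntegral.integral_comp_sub_right, ← hlow, ← hup, integral_Gdt hα hr hprev hcur,
    integral_Gdt hα hr hcur hnext]
  ring
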